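/- arXiv:cs/0701145 — 3 statements merged into one kernel-verified Lean document; each statement's English description precedes it below -/
import Mathlib

section
/- Let M ≥ 1 and fix m ∈ {0,…,M−1}. With Î(r,m) = { rM² + (M+1)m + 1 − M·j : j ∈ {0,…,M−1} } ∩ {n : n ≥ 1}, the family (Î(r,m))_{r ∈ ℕ} is pairwise disjoint and its union equals the set { n ≥ 1 : n ≡ m + 1 (mod M) }. -/
/-!
Write the elements of `Ihat M r m` as `m + 1 + M * k`: the one indexed by `j` has
`k = r * M + m - j`, so `Ihat M r m` is the image of the block `(r M + m - M, r M + m]`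
of values of `k`, cut down to `k ≥ 0` (which is `x ≥ 1`, as `m < M`). For `r ∈ ℕ` these blocks
tile `(m - M, ∞) ⊇ [0, ∞)`, and `k ↦ m + 1 + M * k` is injective and maps `k ≥ 0` onto the
positive integers congruent to `m + 1` modulo `M`.
-/

/-- The set Î(r,m) of (positive) interval indices secured in operation Sec_mult_{r,m}. -/
def Ihat (M r m : ℕ) : Set ℤ :=
  {x : ℤ | (∃ j : ℕ, j < M ∧ x = (r : ℤ) * M ^ 2 + (M + 1) * m + 1 - M * j) ∧ 1 ≤ x}

open Set Function

section Archimedean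

variable {α : Type*} [AddCommGroup α] [LinearOrder α] [IsOrderedAddMonoid α]

theorem pairwise_disjoint_Ioc_add_nsmul (a p : α) :
    Pairwise (Disjoint on fun n : ℕ => Ioc (a + n • p) (a + (n + 1) • p)) := fun m n hmn => by
  have := pairwise_disjoint_Ioc_add_zsmul a p (Nat.cast_injective.ne hmn : (m : ℤ) ≠ n)
  rw [onFun_apply] at this ⊢
  simpa only [← Nat.cast_succ, natCast_zsmul] using this

theorem iUnion_Ioc_add_nsmul [Archimedean α] {p : α} (hp : 0 < p) (a : α) :
    ⋃ n : ℕ, Ioc (a + n • p) (a + (n + 1) • p) = Ioi a := by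
  refine Subset.antisymm (iUnion_subset fun n x hx => ?_) fun x hx => ?_
  · exact lt_of_le_of_lt (le_add_of_nonneg_right (nsmul_nonneg hp.le n)) hx.1
  · have hk := sub_toIocDiv_zsmul_mem_Ioc hp a x
    obtain ⟨n, hn⟩ : ∃ n : ℕ, toIocDiv hp a x = n := by
      refine Int.eq_ofNat_of_zero_le ?_
      by_contra! hneg
      have : toIocDiv hp a x • p ≤ -p := by
        simpa using zsmul_le_zsmul_left hp.le (Int.le_sub_one_of_lt hneg)
      have : x ≤ a := calc
        x ≤ a + p + toIocDiv hp a x • p := sub_le_iff_le_add.1 hk.2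
        _ ≤ a + p + -p := by gcongr
        _ = a := by abel
      exact (mem_Ioi.1 hx).not_ge this
    rw [hn, natCast_zsmul, sub_mem_Ioc_iff_left, add_assoc, ← succ_nsmul', add_comm] at hk
    exact mem_iUnion.2 ⟨n, by simpa only [add_comm _ a] using hk⟩

end Archimedean

theorem one_le_add_one_add_mul_iff {m M k : ℤ} (hm₀ : 0 ≤ m) (hm : m < M) :
    1 ≤ m + 1 + M * k ↔ 0 ≤ k := by
  constructor
  · intro h
    by_contra! hk
    nlinarith
  · intro hk
    nlinarith

theorem Ihat_eq_image {M m : ℕ} (hm : m < M) (r : ℕ) :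
    Ihat M r m = (fun k : ℤ => m + 1 + M * k) ''
      (Ioc ((m : ℤ) - M + r • (M : ℤ)) ((m : ℤ) - M + (r + 1) • (M : ℤ)) ∩ Ici 0) := by
  have hm' : (m : ℤ) < M := by exact_mod_cast hm
  ext x
  simp only [Ihat, mem_ofPred_eq, mem_image, mem_inter_iff, mem_Ioc, mem_Ici, nsmul_eq_mul,
    Nat.cast_add, Nat.cast_one]
  constructor
  · rintro ⟨⟨j, hj, rfl⟩, hx⟩
    have hj' : (j : ℤ) < M := by exact_mod_cast hj
    refine ⟨r * M + m - j, ⟨⟨by linarith, by linarith⟩, ?_⟩, by ring⟩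
    exact (one_le_add_one_add_mul_iff m.cast_nonneg hm').1 (by linarith)
  · rintro ⟨k, ⟨⟨hk₁, hk₂⟩, hk₀⟩, rfl⟩
    refine ⟨⟨(r * M + m - k).toNat, ?_, ?_⟩, (one_le_add_one_add_mul_iff m.cast_nonneg hm').2 hk₀⟩
    · omega
    · rw [Int.toNat_of_nonneg (by linarith)]
      ring

theorem setOf_one_le_emod_eq_image {M m : ℕ} (hm : m < M) :
    {n : ℤ | 1 ≤ n ∧ n % M = ((m : ℤ) + 1) % M} = (fun k : ℤ => m + 1 + M * k) '' Ici 0 := by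
  have hm' : (m : ℤ) < M := by exact_mod_cast hm
  ext n
  constructor
  · rintro ⟨hn, hmod⟩
    obtain ⟨k, rfl⟩ := Int.modEq_iff_add_fac.1 (hmod.symm : (m + 1 : ℤ) ≡ n [ZMOD M])
    exact ⟨k, (one_le_add_one_add_mul_iff m.cast_nonneg hm').1 hn, rfl⟩
  · rintro ⟨k, hk, rfl⟩
    exact ⟨(one_le_add_one_add_mul_iff m.cast_nonneg hm').2 hk, Int.add_mul_emod_self_left _ _ _⟩

theorem Ihat_partition_stream_general (M : ℕ) (m : ℕ) (hm : m < M) :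
    (Pairwise fun r r' : ℕ => Disjoint (Ihat M r m) (Ihat M r' m)) ∧
    (⋃ r : ℕ, Ihat M r m) = {n : ℤ | 1 ≤ n ∧ n % M = ((m : ℤ) + 1) % M} := by
  have hM : (0 : ℤ) < M := by omega
  have hinj : Injective fun k : ℤ => (m : ℤ) + 1 + M * k :=
    fun k k' h => mul_left_cancel₀ hM.ne' (add_left_cancel h)
  simp only [Ihat_eq_image hm]
  refine ⟨fun r r' hrr' => ?_, ?_⟩
  · exact (disjoint_image_iff hinj).2 <|
      (pairwise_disjoint_Ioc_add_nsmul _ _ hrr').mono inter_subset_left inter_subset_left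
  · rw [← image_iUnion, ← iUnion_inter, iUnion_Ioc_add_nsmul hM,
      inter_eq_right.2 (Ici_subset_Ioi.2 (by omega)), setOf_one_le_emod_eq_image hm]

/-- for fixed m, the family (Î(r,m))_r is pairwise disjoint and its union
is the set of n ≥ 1 with n ≡ m + 1 (mod M). -/
theorem Ihat_partition_stream (M : ℕ) (hM : 1 ≤ M) (m : ℕ) (hm : m < M) :
    (Pairwise fun r r' : ℕ => Disjoint (Ihat M r m) (Ihat M r' m)) ∧
    (⋃ r : ℕ, Ihat M r m) = {n : ℤ | 1 ≤ n ∧ n % M = ((m : ℤ) + 1) % M} :=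
  Ihat_partition_stream_general M m hm
end

section
/- Let Agents be a type, K : Agents → Prop → Prop an operator, and Comm : Prop. Assume (monotonicity) for every agent a and propositions p q, (p → q) → K a p → K a q. Let L = [a_1, …, a_n] be a list of agents and assume (signing axiom) for each i ∈ {1,…,n}: K a_i (Comm ∧ ⋀_{j < i} K a_j Comm). If every agent of a finite set S occurs in L, and moreover for every a ∈ S there is an occurrence index i of a such that all agents of S occur among a_1,…,a_{i−1}, then ⋀_{a ∈ S} K a (⋀_{b ∈ S} K b Comm) holds, i.e., multilateral non-repudiation of Comm is achieved for S. -/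
theorem signer_knows_forall_knows_of_signed_before {Agents : Type*} {K : Agents → Prop → Prop}
    {Comm : Prop}
    (hmono : ∀ (a : Agents) (p q : Prop), (p → q) → K a p → K a q) {L : List Agents}
    (hsign : ∀ i : Fin L.length,
      K (L.get i) (Comm ∧ ∀ j : Fin L.length, j < i → K (L.get j) Comm))
    {S : Set Agents} {i : Fin L.length} (hbefore : ∀ b ∈ S, ∃ j < i, L.get j = b) :
    K (L.get i) (∀ b ∈ S, K b Comm) := by
  refine hmono _ _ _ ?_ (hsign i)
  rintro ⟨-, hprev⟩ b hb
  obtain ⟨j, hji, rfl⟩ := hbefore b hb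
  exact hprev j hji

/-- if K is monotone, each signer a_i of the list L knows Comm together
with the knowledge of all previous signers, and every agent of S occurs in L with all of
S occurring strictly earlier, then every agent of S knows that every agent of S knows
Comm (multilateral non-repudiation of Comm for S). -/
theorem multilateral_nonrepudiation {Agents : Type*} (K : Agents → Prop → Prop)
    (Comm : Prop)
    (hmono : ∀ (a : Agents) (p q : Prop), (p → q) → K a p → K a q)
    (L : List Agents)
    (hsign : ∀ i : Fin L.length,
      K (L.get i) (Comm ∧ ∀ j : Fin L.length, j < i → K (L.get j) Comm))
    (S : Finset Agents)
    (hcover : ∀ a ∈ S, ∃ i : Fin L.length, L.get i = a ∧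
      ∀ b ∈ S, ∃ j : Fin L.length, j < i ∧ L.get j = b) :
    ∀ a ∈ S, K a (∀ b ∈ S, K b Comm) := by
  intro a ha
  obtain ⟨i, rfl, hbefore⟩ := hcover a ha
  exact signer_knows_forall_knows_of_signed_before (S := ↑S) hmono hsign hbefore
end

section
/- Let Agents be a type, S : Finset Agents nonempty, K : Agents → Prop → Prop monotone in its propositional argument, and Comm : Prop. Let L be the concatenation of two enumerations of S (each listing every element of S exactly once, in the same order a_1,…,a_M,a_1,…,a_M), and assume the signing axiom: for each position i of L, K (L_i) (Comm ∧ ⋀_{j < i} K (L_j) Comm). Then for all ℓ, k ∈ S: K ℓ (K k Comm). -/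
/-! Whoever signs in the second round signs an object that already contains every first-round
signature, so each agent `ℓ` knows, via its second signature, that each `k` signed (hence knew)
`Comm` in the first round. -/

theorem knows_knows_of_signed_before {Agents : Type*} (K : Agents → Prop → Prop) (Comm : Prop)
    (hmono : ∀ (a : Agents) (p q : Prop), (p → q) → K a p → K a q) (L : List Agents)
    (hsign : ∀ i : Fin L.length,
      K (L.get i) (Comm ∧ ∀ j : Fin L.length, j < i → K (L.get j) Comm))
    {i j : Fin L.length} (hji : j < i) : K (L.get i) (K (L.get j) Comm) :=
  hmono _ _ _ (fun h => h.2 j hji) (hsign i)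

theorem List.exists_get_append_self_of_mem {α : Type*} {e : List α} {a b : α}
    (ha : a ∈ e) (hb : b ∈ e) :
    ∃ i j : Fin (e ++ e).length, j < i ∧ (e ++ e).get i = a ∧ (e ++ e).get j = b := by
  obtain ⟨ia, hia, rfl⟩ := List.getElem_of_mem ha
  obtain ⟨ib, hib, rfl⟩ := List.getElem_of_mem hb
  refine ⟨⟨e.length + ia, by rw [List.length_append]; omega⟩, ⟨ib, by rw [List.length_append]; omega⟩, ?_, ?_, ?_⟩
  · rw [Fin.mk_lt_mk]; omega
  · simp [List.getElem_append_right]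
  · simp [List.getElem_append_left hib]

theorem lemma_one_general {Agents : Type*} (K : Agents → Prop → Prop) (Comm : Prop)
    (hmono : ∀ (a : Agents) (p q : Prop), (p → q) → K a p → K a q)
    (S : Finset Agents)
    (e : List Agents) (he_mem : ∀ a, a ∈ e ↔ a ∈ S)
    (L : List Agents) (hL : L = e ++ e)
    (hsign : ∀ i : Fin L.length,
      K (L.get i) (Comm ∧ ∀ j : Fin L.length, j < i → K (L.get j) Comm)) :
    ∀ ℓ ∈ S, ∀ k ∈ S, K ℓ (K k Comm) := by
  subst hL
  intro ℓ hℓ k hk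
  obtain ⟨i, j, hji, rfl, rfl⟩ :=
    List.exists_get_append_self_of_mem ((he_mem ℓ).mpr hℓ) ((he_mem k).mpr hk)
  exact knows_knows_of_signed_before K Comm hmono _ hsign hji

/-- Lemma 1 of the paper: nesting signatures in the order
a_1,…,a_M,a_1,…,a_M (two identical enumerations of S) around Comm achieves
multilateral non-repudiation: every party knows that every party knows Comm. -/
theorem lemma_one {Agents : Type*} (K : Agents → Prop → Prop) (Comm : Prop)
    (hmono : ∀ (a : Agents) (p q : Prop), (p → q) → K a p → K a q)
    (S : Finset Agents) (hS : S.Nonempty)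
    (e : List Agents) (he_nodup : e.Nodup) (he_mem : ∀ a, a ∈ e ↔ a ∈ S)
    (L : List Agents) (hL : L = e ++ e)
    (hsign : ∀ i : Fin L.length,
      K (L.get i) (Comm ∧ ∀ j : Fin L.length, j < i → K (L.get j) Comm)) :
    ∀ ℓ ∈ S, ∀ k ∈ S, K ℓ (K k Comm) :=
  lemma_one_general K Comm hmono S e he_mem L hL hsign
end
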